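/- Grelling's paradox, negative half: in minimal logic with the axiom scheme P(x) → T(P,x), if H is defined by H(P) ↔ T(¬P, P), then ¬¬H(H) is derivable. -/
import Mathlib


/-- Propositional formulas built from variables and ⊥ using ∧, ∨, →. -/
inductive Fm : Type
  | var : ℕ → Fm
  | bot : Fm
  | and : Fm → Fm → Fm
  | or : Fm → Fm → Fm
  | imp : Fm → Fm → Fm
deriving DecidableEq

/-- ¬A is defined as A → ⊥. -/
def Fm.neg (A : Fm) : Fm := A.imp .bot

/-- Hilbert-style derivability in minimal propositional logic (intuitionistic
logic without ex falso quodlibet), extended by an extra set `Ax` of axioms. -/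
inductive Deriv (Ax : Fm → Prop) : Fm → Prop
  | ax {A} : Ax A → Deriv Ax A
  | k (A B : Fm) : Deriv Ax (A.imp (B.imp A))
  | s (A B C : Fm) : Deriv Ax ((A.imp (B.imp C)).imp ((A.imp B).imp (A.imp C)))
  | andI (A B : Fm) : Deriv Ax (A.imp (B.imp (A.and B)))
  | andE1 (A B : Fm) : Deriv Ax ((A.and B).imp A)
  | andE2 (A B : Fm) : Deriv Ax ((A.and B).imp B)
  | orI1 (A B : Fm) : Deriv Ax (A.imp (A.or B))
  | orI2 (A B : Fm) : Deriv Ax (B.imp (A.or B))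
  | orE (A B C : Fm) : Deriv Ax ((A.imp C).imp ((B.imp C).imp ((A.or B).imp C)))
  | mp {A B : Fm} : Deriv Ax (A.imp B) → Deriv Ax A → Deriv Ax B

lemma Deriv.id (Ax : Fm → Prop) (A : Fm) : Deriv Ax (A.imp A) :=
  .mp (.mp (.s A (A.imp A) A) (.k A (A.imp A))) (.k A A)

lemma Deriv.comp {Ax : Fm → Prop} {A B C : Fm}
    (f : Deriv Ax (A.imp B)) (g : Deriv Ax (B.imp C)) : Deriv Ax (A.imp C) :=
  .mp (.mp (.s A B C) (.mp (.k (B.imp C) A) g)) f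

/-- Grelling, negative half: with only the scheme
P(x) → T(P,x) and H(P) ↔ T(¬P, P), one derives ¬¬H(H). -/
theorem stmt9 (Pred : Type) (Ax : Fm → Prop)
    (app : Pred → Pred → Fm) (T2 : Pred → Pred → Fm)
    (pneg : Pred → Pred)
    (hneg : ∀ (P x : Pred), app (pneg P) x = (app P x).neg)
    (h1 : ∀ (P x : Pred), Deriv Ax ((app P x).imp (T2 P x)))
    (H : Pred)
    (hH1 : ∀ P : Pred, Deriv Ax ((app H P).imp (T2 (pneg P) P)))
    (hH2 : ∀ P : Pred, Deriv Ax ((T2 (pneg P) P).imp (app H P))) :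
    Deriv Ax (app H H).neg.neg := by
  set A := app H H with hA
  set N := A.neg with hN
  have d1 : Deriv Ax (N.imp (T2 (pneg H) H)) := by
    have := h1 (pneg H) H
    rwa [hneg] at this
  have d2 : Deriv Ax (N.imp A) := d1.comp (hH2 H)
  have didN : Deriv Ax (N.imp (A.imp Fm.bot)) := Deriv.id Ax N
  exact .mp (.mp (.s N A .bot) didN) d2
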